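/- arXiv:1111.2108 — 6 statements merged into one kernel-verified Lean document; each statement's English description precedes it below -/
import Mathlib

section
/- Let K ≥ 1 and let A₀ = [[a, b], [c, d]], A₁ = [[a₁, r₁·b], [r₁·c, d₁]], …, A_K = [[a_K, r_K·b], [r_K·c, d_K]] be real 2×2 matrices (so all matrices share the same off-diagonal pair (b, c) up to the scalar factors r₁, …, r_K). If b·c > 0, then there exists an invertible real 2×2 matrix Q such that Q·A_k·Q⁻¹ is symmetric for every k with 0 ≤ k ≤ K. -/
open Matrix

/-! Conjugating by `diag(s, 1)` multiplies the upper off-diagonal entry by `s` and divides the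
lower one by `s`. For `!![a, r b; r c, d]` both entries agree as soon as `s² b = c`, whatever
`r`, `a`, `d` are, and such a real `s ≠ 0` exists exactly because `c / b > 0`. -/

theorem Matrix.isSymm_fin_two_of_iff {α : Type*} (a b c d : α) :
    !![a, b; c, d].IsSymm ↔ b = c := by
  simp [IsSymm.ext_iff, Fin.forall_fin_two, eq_comm]

section Field

variable {F : Type*} [Field F]

theorem Matrix.diagonal_mul_mul_inv_diagonal_fin_two {s : F} (hs : s ≠ 0) (a x y d : F) :
    diagonal ![s, 1] * !![a, x; y, d] * (diagonal ![s, 1])⁻¹ = !![a, s * x; y / s, d] := by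
  have hinv : (diagonal ![s, 1])⁻¹ = diagonal ![s⁻¹, 1] :=
    inv_eq_right_inv <| by simp [diagonal_mul_diagonal, ← diagonal_one, hs, Fin.forall_fin_two]
  rw [hinv]
  simp only [diagonal_fin_two, mul_fin_two]
  ext i j
  fin_cases i <;> fin_cases j <;> simp <;> field_simp

theorem Matrix.isSymm_diagonal_mul_mul_inv_diagonal_of_sq_mul_eq {s b c : F} (hs : s ≠ 0)
    (hsb : s ^ 2 * b = c) (a r d : F) :
    (diagonal ![s, 1] * !![a, r * b; r * c, d] * (diagonal ![s, 1])⁻¹).IsSymm := by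
  rw [diagonal_mul_mul_inv_diagonal_fin_two hs, isSymm_fin_two_of_iff, eq_div_iff hs, ← hsb]
  ring

end Field

theorem Real.exists_sq_mul_eq_of_mul_pos {b c : ℝ} (hbc : 0 < b * c) :
    ∃ s : ℝ, s ≠ 0 ∧ s ^ 2 * b = c := by
  have hb : b ≠ 0 := by rintro rfl; simp at hbc
  have hcb : 0 < c / b := by
    rw [show c / b = b * c / b ^ 2 by field_simp]
    positivity
  refine ⟨√(c / b), (Real.sqrt_pos.mpr hcb).ne', ?_⟩
  rw [Real.sq_sqrt hcb.le, div_mul_cancel₀ c hb]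

theorem simultaneous_symmetrization_general
    (K : ℕ) (b c : ℝ)
    (aa dd r : Fin (K + 1) → ℝ)
    (A : Fin (K + 1) → Matrix (Fin 2) (Fin 2) ℝ)
    (hA : ∀ k, A k = !![aa k, r k * b; r k * c, dd k])
    (hbc : b * c > 0) :
    ∃ Q : Matrix (Fin 2) (Fin 2) ℝ, IsUnit Q ∧ ∀ k, (Q * A k * Q⁻¹).IsSymm := by
  obtain ⟨s, hs, hsb⟩ := Real.exists_sq_mul_eq_of_mul_pos hbc
  refine ⟨diagonal ![s, 1], isUnit_diagonal.mpr ?_, fun k => ?_⟩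
  · simp [Pi.isUnit_iff, Fin.forall_fin_two, hs]
  · rw [hA k]
    exact isSymm_diagonal_mul_mul_inv_diagonal_of_sq_mul_eq hs hsb _ _ _

/-- simultaneous symmetrization of a finite family of real 2×2
matrices sharing the off-diagonal pair `(b, c)` up to scalar factors `r k`
(with `r 0 = 1`, so `A 0 = !![a, b; c, d]`), under the condition `b * c > 0`. -/
theorem simultaneous_symmetrization
    (K : ℕ) (hK : 1 ≤ K) (b c : ℝ)
    (aa dd r : Fin (K + 1) → ℝ) (hr0 : r 0 = 1)
    (A : Fin (K + 1) → Matrix (Fin 2) (Fin 2) ℝ)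
    (hA : ∀ k, A k = !![aa k, r k * b; r k * c, dd k])
    (hbc : b * c > 0) :
    ∃ Q : Matrix (Fin 2) (Fin 2) ℝ, IsUnit Q ∧ ∀ k, (Q * A k * Q⁻¹).IsSymm :=
  simultaneous_symmetrization_general K b c aa dd r A hA hbc
end

section
/- Let K ≥ 1 and let A₀ = [[a, b], [c, d]], A₁ = [[a₁, r₁·b], [r₁·c, d₁]], …, A_K = [[a_K, r_K·b], [r_K·c, d_K]] be real 2×2 matrices. If b·c ≥ 0, then the generalized spectral radius of 𝒜 = {A₀, …, A_K} equals max{ρ(A₀), ρ(A₁), …, ρ(A_K)}; that is, sup_{n≥1} max_{M ∈ 𝒜ⁿ} ρ(M)^{1/n} = max_{0≤k≤K} ρ(A_k). -/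
open Matrix

/-- The spectral radius of a real 2×2 matrix: the maximum modulus of its
complex eigenvalues. -/
noncomputable def specRad (M : Matrix (Fin 2) (Fin 2) ℝ) : ℝ :=
  (spectralRadius ℂ (M.map Complex.ofReal)).toReal

/-- `prodsOfLen 𝒜 n` is the set `𝒜ⁿ` of all products of `n` matrices taken
from `𝒜`. -/
def prodsOfLen (𝒜 : Set (Matrix (Fin 2) (Fin 2) ℝ)) (n : ℕ) :
    Set (Matrix (Fin 2) (Fin 2) ℝ) :=
  {M | ∃ l : List (Matrix (Fin 2) (Fin 2) ℝ),
    l.length = n ∧ (∀ X ∈ l, X ∈ 𝒜) ∧ M = l.prod}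

/-- The generalized spectral radius of `𝒜`:
`sup_{n ≥ 1} max_{M ∈ 𝒜ⁿ} ρ(M)^(1/n)`. -/
noncomputable def gsr (𝒜 : Set (Matrix (Fin 2) (Fin 2) ℝ)) : ℝ :=
  sSup {x : ℝ | ∃ n : ℕ, 1 ≤ n ∧ ∃ M ∈ prodsOfLen 𝒜 n,
    x = specRad M ^ ((1 : ℝ) / n)}

/-- `𝒜` has the spectral finiteness property if its generalized spectral
radius is realized as `ρ(M)^(1/n)` for some `n ≥ 1` and some `M ∈ 𝒜ⁿ`. -/
def hasSpectralFiniteness (𝒜 : Set (Matrix (Fin 2) (Fin 2) ℝ)) : Prop :=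
  ∃ n : ℕ, 1 ≤ n ∧ ∃ M ∈ prodsOfLen 𝒜 n, gsr 𝒜 = specRad M ^ ((1 : ℝ) / n)


/-!
Everything rests on the inequality `ρ(M₁ ⋯ Mₙ) ≤ ρ(M₁) ⋯ ρ(Mₙ)` for products of members of the
family, which bounds each `ρ(M)^(1/n)` by the largest `ρ(A k)`; that maximum is attained at
`n = 1`. If `b * c > 0`, conjugation by `diag(1, t)` with `t² = c / b` makes every member of the
family real symmetric, so in the conjugated picture the spectral radius of each generator is its
operator 2-norm, and the inequality follows from submultiplicativity of that norm. If `b * c = 0`,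
the family is simultaneously triangular: the spectral radius of a triangular matrix is the sup norm
of its diagonal, and the diagonal of a product is the product of the diagonals.
-/

open scoped Matrix.Norms.L2Operator

theorem specRad_nonneg (M : Matrix (Fin 2) (Fin 2) ℝ) : 0 ≤ specRad M :=
  ENNReal.toReal_nonneg

theorem specRad_units_conj (U : (Matrix (Fin 2) (Fin 2) ℝ)ˣ) (X : Matrix (Fin 2) (Fin 2) ℝ) :
    specRad ((↑U⁻¹ : Matrix (Fin 2) (Fin 2) ℝ) * X * U) = specRad X := by
  let V := Units.map (Complex.ofRealHom.mapMatrix : Matrix (Fin 2) (Fin 2) ℝ →+* _).toMonoidHom U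
  have hV : ((↑U⁻¹ : Matrix (Fin 2) (Fin 2) ℝ) * X * U).map Complex.ofReal =
      (↑V⁻¹ : Matrix (Fin 2) (Fin 2) ℂ) * X.map Complex.ofReal * V := by
    change Complex.ofRealHom.mapMatrix _ = _
    rw [map_mul, map_mul]
    rfl
  rw [specRad, specRad, hV, spectralRadius, spectralRadius, spectrum.units_conjugate']

theorem specRad_le_norm (X : Matrix (Fin 2) (Fin 2) ℝ) : specRad X ≤ ‖X.map Complex.ofReal‖ :=
  ENNReal.toReal_le_of_le_ofReal (norm_nonneg _)
    ((spectrum.spectralRadius_le_nnnorm _).trans_eq (ofReal_norm _).symm)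

theorem specRad_eq_norm_of_isSymm {X : Matrix (Fin 2) (Fin 2) ℝ} (hX : X.IsSymm) :
    specRad X = ‖X.map Complex.ofReal‖ := by
  have hself : IsSelfAdjoint (X.map Complex.ofReal) :=
    ((Matrix.isHermitian_iff_isSymm (A := X)).2 hX).map _ fun _ => (Complex.conj_ofReal _).symm
  rw [specRad, hself.spectralRadius_eq_nnnorm]
  rfl

theorem specRad_list_prod_le_of_isSymm (l : List (Matrix (Fin 2) (Fin 2) ℝ))
    (hl : ∀ X ∈ l, X.IsSymm) : specRad l.prod ≤ (l.map specRad).prod :=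
  calc specRad l.prod ≤ ‖l.prod.map Complex.ofReal‖ := specRad_le_norm _
    _ = ‖(l.map Complex.ofRealHom.mapMatrix).prod‖ :=
        congrArg norm (map_list_prod (Complex.ofRealHom.mapMatrix (m := Fin 2)) l)
    _ ≤ ((l.map Complex.ofRealHom.mapMatrix).map norm).prod := List.norm_prod_le _
    _ = (l.map specRad).prod := by
        rw [List.map_map]
        exact congrArg _
          (List.map_congr_left fun X hX => (specRad_eq_norm_of_isSymm (hl X hX)).symm)

theorem specRad_list_prod_le_of_units_conj_isSymm (U : (Matrix (Fin 2) (Fin 2) ℝ)ˣ)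
    (l : List (Matrix (Fin 2) (Fin 2) ℝ))
    (hl : ∀ X ∈ l, ((↑U⁻¹ : Matrix (Fin 2) (Fin 2) ℝ) * X * U).IsSymm) :
    specRad l.prod ≤ (l.map specRad).prod := by
  let conj := MulDistribMulAction.toMonoidHom (Matrix (Fin 2) (Fin 2) ℝ) (ConjAct.toConjAct U⁻¹)
  have hconj : ∀ X, conj X = (↑U⁻¹ : Matrix (Fin 2) (Fin 2) ℝ) * X * U := fun X => by
    simp [conj, ConjAct.units_smul_def]
  calc specRad l.prod = specRad (l.map conj).prod := by
        rw [← map_list_prod, hconj, specRad_units_conj]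
    _ ≤ ((l.map conj).map specRad).prod :=
        specRad_list_prod_le_of_isSymm _ (by simpa [hconj] using hl)
    _ = (l.map specRad).prod := by
        rw [List.map_map]
        exact congrArg _ (List.map_congr_left fun X _ => by
          rw [Function.comp_apply, hconj, specRad_units_conj])

theorem spectrum_eq_of_mul_offDiag_eq_zero {𝕜 : Type*} [Field 𝕜] (N : Matrix (Fin 2) (Fin 2) 𝕜)
    (h : N 0 1 * N 1 0 = 0) : spectrum 𝕜 N = {N 0 0, N 1 1} := by
  ext z
  have hchar : z ^ 2 - N.trace * z + N.det = (z - N 0 0) * (z - N 1 1) := by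
    rw [trace_fin_two, det_fin_two, h]
    ring
  rw [Matrix.mem_spectrum_iff_isRoot_charpoly, Matrix.charpoly_fin_two]
  simp [hchar, sub_eq_zero]

theorem specRad_eq_norm_diag_of_mul_offDiag_eq_zero (M : Matrix (Fin 2) (Fin 2) ℝ)
    (h : M 0 1 * M 1 0 = 0) : specRad M = ‖M.diag‖ := by
  have hC : (M.map Complex.ofReal) 0 1 * (M.map Complex.ofReal) 1 0 = 0 := by
    simp [← Complex.ofReal_mul, h]
  rw [specRad, spectralRadius, spectrum_eq_of_mul_offDiag_eq_zero _ hC, iSup_pair]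
  simp [Pi.norm_def, Fin.univ_succ, ← ENNReal.coe_max]

namespace Matrix.BlockTriangular

variable {m R α : Type*} [LinearOrder α] {b : m → α}

theorem diag_mul [Fintype m] [NonUnitalNonAssocSemiring R] (hb : Function.Injective b)
    {M N : Matrix m m R} (hM : M.BlockTriangular b) (hN : N.BlockTriangular b) :
    (M * N).diag = M.diag * N.diag := by
  ext i
  simp only [diag_apply, mul_apply, Pi.mul_apply]
  refine Finset.sum_eq_single i (fun k _ hki => ?_) (by simp)
  rcases (hb.ne hki).lt_or_gt with hlt | hgt
  · rw [hM hlt, zero_mul]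
  · rw [hN hgt, mul_zero]

theorem list_prod [Fintype m] [DecidableEq m] [Semiring R] {l : List (Matrix m m R)}
    (hl : ∀ M ∈ l, M.BlockTriangular b) : l.prod.BlockTriangular b := by
  induction l with
  | nil => exact blockTriangular_one
  | cons M l ih =>
    simp only [List.forall_mem_cons] at hl
    exact hl.1.mul (ih hl.2)

theorem diag_list_prod [Fintype m] [DecidableEq m] [Semiring R] (hb : Function.Injective b)
    {l : List (Matrix m m R)} (hl : ∀ M ∈ l, M.BlockTriangular b) :
    l.prod.diag = (l.map diag).prod := by
  induction l with
  | nil => exact diag_one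
  | cons M l ih =>
    simp only [List.forall_mem_cons] at hl
    rw [List.prod_cons, hl.1.diag_mul hb (list_prod hl.2), ih hl.2, List.map_cons, List.prod_cons]

theorem mul_offDiag_eq_zero [MulZeroClass R] {b : Fin 2 → α} (hb : Function.Injective b)
    {M : Matrix (Fin 2) (Fin 2) R} (hM : M.BlockTriangular b) : M 0 1 * M 1 0 = 0 := by
  rcases (hb.ne (show (0 : Fin 2) ≠ 1 by decide)).lt_or_gt with hlt | hgt
  · rw [hM hlt, mul_zero]
  · rw [hM hgt, zero_mul]

end Matrix.BlockTriangular

theorem Matrix.isUpperTriangular_of_fin_two {R : Type*} [Zero R] {M : Matrix (Fin 2) (Fin 2) R}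
    (h : M 1 0 = 0) : M.IsUpperTriangular := fun i j hij => by
  fin_cases i <;> fin_cases j <;> first | exact h | exact absurd hij (by decide)

theorem Matrix.isLowerTriangular_of_fin_two {R : Type*} [Zero R] {M : Matrix (Fin 2) (Fin 2) R}
    (h : M 0 1 = 0) : M.IsLowerTriangular := fun i j hij => by
  fin_cases i <;> fin_cases j <;> first | exact h | exact absurd hij (by decide)

theorem specRad_list_prod_le_of_blockTriangular {α : Type*} [LinearOrder α] {b : Fin 2 → α}
    (hb : Function.Injective b) (l : List (Matrix (Fin 2) (Fin 2) ℝ))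
    (hl : ∀ X ∈ l, X.BlockTriangular b) : specRad l.prod ≤ (l.map specRad).prod := by
  have hspec : ∀ {X : Matrix (Fin 2) (Fin 2) ℝ}, X.BlockTriangular b → specRad X = ‖X.diag‖ :=
    fun hX => specRad_eq_norm_diag_of_mul_offDiag_eq_zero _ (hX.mul_offDiag_eq_zero hb)
  calc specRad l.prod = ‖(l.map diag).prod‖ := by
        rw [hspec (BlockTriangular.list_prod hl), BlockTriangular.diag_list_prod hb hl]
    _ ≤ ((l.map diag).map norm).prod := List.norm_prod_le _
    _ = (l.map specRad).prod := by
        rw [List.map_map]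
        exact congrArg _ (List.map_congr_left fun X hX => (hspec (hl X hX)).symm)

theorem specRad_list_prod_le_of_offDiag_proportional {b c : ℝ} (hbc : 0 ≤ b * c)
    (l : List (Matrix (Fin 2) (Fin 2) ℝ)) (hl : ∀ X ∈ l, ∃ s : ℝ, X 0 1 = s * b ∧ X 1 0 = s * c) :
    specRad l.prod ≤ (l.map specRad).prod := by
  rcases hbc.eq_or_lt with hbc0 | hbc_pos
  · rcases mul_eq_zero.1 hbc0.symm with rfl | rfl
    · refine specRad_list_prod_le_of_blockTriangular OrderDual.toDual.injective l fun X hX => ?_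
      obtain ⟨s, h01, -⟩ := hl X hX
      exact isLowerTriangular_of_fin_two (by simpa using h01)
    · refine specRad_list_prod_le_of_blockTriangular Function.injective_id l fun X hX => ?_
      obtain ⟨s, -, h10⟩ := hl X hX
      exact isUpperTriangular_of_fin_two (by simpa using h10)
  · have hb : b ≠ 0 := left_ne_zero_of_mul hbc_pos.ne'
    have hcb : 0 < c / b := by
      simpa [mul_div_mul_left _ _ hb] using div_pos hbc_pos (mul_self_pos.2 hb)
    obtain ⟨t, ht, hct⟩ : ∃ t : ℝ, t ≠ 0 ∧ c = b * t ^ 2 :=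
      ⟨√(c / b), (Real.sqrt_pos.2 hcb).ne', by rw [Real.sq_sqrt hcb.le]; field_simp⟩
    let D : (Matrix (Fin 2) (Fin 2) ℝ)ˣ :=
      ⟨diagonal ![1, t], diagonal ![1, t⁻¹], by simp [← diagonal_one, ht],
        by simp [← diagonal_one, ht]⟩
    refine specRad_list_prod_le_of_units_conj_isSymm D l fun X hX => IsSymm.ext fun i j => ?_
    obtain ⟨s, h01, h10⟩ := hl X hX
    fin_cases i <;> fin_cases j <;> simp [D, h01, h10, hct] <;> field_simp

theorem gsr_range_eq_iSup_of_specRad_list_prod_le {ι : Type*} [Finite ι]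
    (A : ι → Matrix (Fin 2) (Fin 2) ℝ)
    (hA : ∀ l : List (Matrix (Fin 2) (Fin 2) ℝ), (∀ X ∈ l, X ∈ Set.range A) →
      specRad l.prod ≤ (l.map specRad).prod) :
    gsr (Set.range A) = ⨆ i, specRad (A i) := by
  set R := ⨆ i, specRad (A i)
  have hR : 0 ≤ R := Real.iSup_nonneg fun i => specRad_nonneg (A i)
  have hAR : ∀ i, specRad (A i) ≤ R := le_ciSup (Set.finite_range _).bddAbove
  have hbound : ∀ x ∈ {x : ℝ | ∃ n : ℕ, 1 ≤ n ∧ ∃ M ∈ prodsOfLen (Set.range A) n,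
      x = specRad M ^ ((1 : ℝ) / n)}, x ≤ R := by
    rintro x ⟨n, hn, M, ⟨l, rfl, hl, rfl⟩, rfl⟩
    have hpow : specRad l.prod ≤ R ^ l.length := calc
      specRad l.prod ≤ (l.map specRad).prod := hA l hl
      _ ≤ (l.map fun _ => R).prod := List.prod_map_le_prod_map₀ _ _
          (fun X _ => specRad_nonneg X) fun X hX => by obtain ⟨i, rfl⟩ := hl X hX; exact hAR i
      _ = R ^ l.length := by simp [List.map_const', List.prod_replicate]
    calc specRad l.prod ^ ((1 : ℝ) / l.length) ≤ (R ^ l.length) ^ ((1 : ℝ) / l.length) :=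
          Real.rpow_le_rpow (specRad_nonneg _) hpow (by positivity)
      _ = R := by rw [one_div, Real.pow_rpow_inv_natCast hR (by omega)]
  apply le_antisymm
  · exact Real.sSup_le hbound hR
  · refine Real.iSup_le (fun i => le_csSup ⟨R, hbound⟩ ?_) ?_
    · exact ⟨1, le_rfl, A i, ⟨[A i], rfl, by simp, by simp⟩, by simp⟩
    · exact Real.sSup_nonneg fun x ⟨n, _, M, _, hx⟩ => hx ▸ Real.rpow_nonneg (specRad_nonneg M) _

theorem gsr_eq_max_of_shared_offdiagonal_general
    (K : ℕ) (b c : ℝ)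
    (aa dd r : Fin (K + 1) → ℝ)
    (A : Fin (K + 1) → Matrix (Fin 2) (Fin 2) ℝ)
    (hA : ∀ k, A k = !![aa k, r k * b; r k * c, dd k])
    (hbc : b * c ≥ 0) :
    gsr (Set.range A) = ⨆ k, specRad (A k) := by
  refine gsr_range_eq_iSup_of_specRad_list_prod_le A fun l hl =>
    specRad_list_prod_le_of_offDiag_proportional hbc l fun X hX => ?_
  obtain ⟨k, rfl⟩ := hl X hX
  exact ⟨r k, by simp [hA k]⟩

/-- if all matrices share the off-diagonal pair `(b, c)` up to
scalar factors `r k` (with `r 0 = 1`) and `b * c ≥ 0`, then the generalized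
spectral radius of the family equals the maximum of the spectral radii of the
constituent matrices. -/
theorem gsr_eq_max_of_shared_offdiagonal
    (K : ℕ) (hK : 1 ≤ K) (b c : ℝ)
    (aa dd r : Fin (K + 1) → ℝ) (hr0 : r 0 = 1)
    (A : Fin (K + 1) → Matrix (Fin 2) (Fin 2) ℝ)
    (hA : ∀ k, A k = !![aa k, r k * b; r k * c, dd k])
    (hbc : b * c ≥ 0) :
    gsr (Set.range A) = ⨆ k, specRad (A k) :=
  gsr_eq_max_of_shared_offdiagonal_general K b c aa dd r A hA hbc
end

section
/- Let A = [[λ₁, 0], [0, λ₂]] be a real diagonal 2×2 matrix and B = [[a, b], [c, d]] a real 2×2 matrix. If b·c ≥ 0, then the generalized spectral radius of {A, B} equals max{ρ(A), ρ(B)}; in particular {A, B} has the spectral finiteness property. -/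
open Matrix

/-!
The spectral radius is invariant under conjugation and bounded by the (submultiplicative) L2
operator norm, so if a single invertible `P` gives `‖P X P⁻¹‖ ≤ m + ε` for every letter `X`, then
every product of `n` letters has spectral radius at most `(m + ε) ^ n`. Conjugating by
`diag(1, u)` fixes `A`, whose norm is `ρ(A)` because it is symmetric, and turns `B` into
`[[a, b/u], [c u, d]]`. If `b c > 0`, the choice `u = √(b/c)` makes this symmetric, so its norm
is `ρ(B)`. If `b c = 0`, `B` is triangular, its diagonal entries are eigenvalues, and a suitable
`u` makes the remaining off-diagonal entry smaller than `ε`.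
-/

open scoped Matrix.Norms.L2Operator

section FinTwo
variable {K : Type*} [Field K]

theorem mem_spectrum_fin_two_iff (M : Matrix (Fin 2) (Fin 2) K) (z : K) :
    z ∈ spectrum K M ↔ (z - M 0 0) * (z - M 1 1) - M 0 1 * M 1 0 = 0 := by
  rw [spectrum.mem_iff, isUnit_iff_isUnit_det, isUnit_iff_ne_zero, not_not, det_fin_two]
  simp [algebraMap_matrix_apply]

theorem diag_mem_spectrum_of_mul_eq_zero {M : Matrix (Fin 2) (Fin 2) K}
    (h : M 0 1 * M 1 0 = 0) (i : Fin 2) : M i i ∈ spectrum K M := by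
  fin_cases i <;> simp [mem_spectrum_fin_two_iff, h]

def diagScaling (u : Kˣ) : (Matrix (Fin 2) (Fin 2) K)ˣ where
  val := !![1, 0; 0, (u : K)]
  inv := !![1, 0; 0, (u : K)⁻¹]
  val_inv := by ext i j; fin_cases i <;> fin_cases j <;> simp
  inv_val := by ext i j; fin_cases i <;> fin_cases j <;> simp

theorem diagScaling_conj (u : Kˣ) (p q r s : K) :
    diagScaling u * !![p, q; r, s] * (diagScaling u)⁻¹ = !![p, q * (u : K)⁻¹; r * u, s] := by
  ext i j; fin_cases i <;> fin_cases j <;> simp [diagScaling, mul_comm]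

end FinTwo

section BanachAlgebra
variable {𝕜 A : Type*} [NormedField 𝕜] [NormedRing A] [NormedAlgebra 𝕜 A] [CompleteSpace A]
  [NormOneClass A]

theorem norm_le_toReal_spectralRadius {a : A} {k : 𝕜} (hk : k ∈ spectrum 𝕜 a) :
    ‖k‖ ≤ (spectralRadius 𝕜 a).toReal :=
  ENNReal.toReal_mono
    (ne_top_of_le_ne_top ENNReal.coe_ne_top (spectrum.spectralRadius_le_nnnorm a))
    (le_iSup₂ (f := fun k _ => (‖k‖₊ : ENNReal)) k hk)

variable (𝕜) in
theorem toReal_spectralRadius_le_norm (a : A) : (spectralRadius 𝕜 a).toReal ≤ ‖a‖ := by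
  simpa using ENNReal.toReal_mono ENNReal.coe_ne_top (spectrum.spectralRadius_le_nnnorm (𝕜 := 𝕜) a)

end BanachAlgebra

theorem norm_units_conj_list_prod_le {A : Type*} [NormedRing A] [NormOneClass A] (P : Aˣ)
    {K : ℝ} {l : List A} (hl : ∀ X ∈ l, ‖P * X * P⁻¹‖ ≤ K) :
    ‖P * l.prod * P⁻¹‖ ≤ K ^ l.length := by
  induction l with
  | nil => simp
  | cons x t ih =>
    have hx := hl x List.mem_cons_self
    have hsplit : P * (x :: t).prod * P⁻¹ = (P * x * P⁻¹) * (P * t.prod * P⁻¹) := by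
      simp only [List.prod_cons, mul_assoc, Units.inv_mul_cancel_left]
    rw [hsplit, List.length_cons, pow_succ']
    exact (norm_mul_le _ _).trans (mul_le_mul hx (ih fun X hX => hl X (List.mem_cons_of_mem x hX))
      (norm_nonneg _) ((norm_nonneg _).trans hx))

section FinTwoNorm
variable {𝕜 : Type*} [RCLike 𝕜]

theorem norm_vec_fin_two (p s : 𝕜) : ‖![p, s]‖ = max ‖p‖ ‖s‖ := by
  simp [Pi.norm_def, Fin.univ_succ]

theorem norm_antidiagonal_fin_two (q r : 𝕜) : ‖!![0, q; r, 0]‖ = max ‖q‖ ‖r‖ := by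
  have hsq : ‖!![0, q; r, 0]‖ * ‖!![0, q; r, 0]‖ = max ‖q‖ ‖r‖ * max ‖q‖ ‖r‖ := by
    rw [← l2_opNorm_conjTranspose_mul_self]
    have hdiag : (!![0, q; r, 0])ᴴ * !![0, q; r, 0] = diagonal ![(‖r‖ ^ 2 : 𝕜), (‖q‖ ^ 2 : 𝕜)] := by
      ext i j; fin_cases i <;> fin_cases j <;> simp [mul_apply, Fin.sum_univ_two, RCLike.conj_mul]
    rw [hdiag, l2_opNorm_diagonal, norm_vec_fin_two]
    simp only [norm_pow, RCLike.norm_ofReal, abs_norm]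
    rcases le_total ‖q‖ ‖r‖ with h | h
    · rw [max_eq_left (by gcongr), max_eq_right h, sq]
    · rw [max_eq_right (by gcongr), max_eq_left h, sq]
  exact (mul_self_inj (norm_nonneg _) (le_max_of_le_left (norm_nonneg _))).mp hsq

theorem norm_fin_two_le (M : Matrix (Fin 2) (Fin 2) 𝕜) :
    ‖M‖ ≤ max ‖M 0 0‖ ‖M 1 1‖ + max ‖M 0 1‖ ‖M 1 0‖ := by
  have hM : M = diagonal ![M 0 0, M 1 1] + !![0, M 0 1; M 1 0, 0] := by
    ext i j; fin_cases i <;> fin_cases j <;> simp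
  calc ‖M‖ ≤ ‖diagonal ![M 0 0, M 1 1]‖ + ‖!![0, M 0 1; M 1 0, 0]‖ := by
        conv_lhs => rw [hM]
        exact norm_add_le _ _
    _ = _ := by rw [l2_opNorm_diagonal, norm_vec_fin_two, norm_antidiagonal_fin_two]

theorem norm_le_toReal_spectralRadius_add_of_mul_eq_zero {M : Matrix (Fin 2) (Fin 2) 𝕜}
    (h : M 0 1 * M 1 0 = 0) :
    ‖M‖ ≤ (spectralRadius 𝕜 M).toReal + max ‖M 0 1‖ ‖M 1 0‖ := by
  have hdiag : max ‖M 0 0‖ ‖M 1 1‖ ≤ (spectralRadius 𝕜 M).toReal :=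
    max_le (norm_le_toReal_spectralRadius (diag_mem_spectrum_of_mul_eq_zero h 0))
      (norm_le_toReal_spectralRadius (diag_mem_spectrum_of_mul_eq_zero h 1))
  linarith [norm_fin_two_le M]

end FinTwoNorm

theorem isSelfAdjoint_ofReal_fin_two (p q r : ℝ) : IsSelfAdjoint !![(p : ℂ), q; q, r] := by
  ext i j; fin_cases i <;> fin_cases j <;> simp [star_apply]

section SpecRad

theorem specRad_eq_toReal_spectralRadius_conj (P : (Matrix (Fin 2) (Fin 2) ℂ)ˣ)
    (X : Matrix (Fin 2) (Fin 2) ℝ) :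
    specRad X = (spectralRadius ℂ (P * X.map Complex.ofReal * P⁻¹)).toReal := by
  rw [specRad, spectralRadius, spectralRadius, spectrum.units_conjugate]

theorem norm_conj_eq_specRad {P : (Matrix (Fin 2) (Fin 2) ℂ)ˣ} {X : Matrix (Fin 2) (Fin 2) ℝ}
    (h : IsSelfAdjoint (P * X.map Complex.ofReal * P⁻¹)) :
    ‖P * X.map Complex.ofReal * P⁻¹‖ = specRad X := by
  rw [specRad_eq_toReal_spectralRadius_conj P, h.toReal_spectralRadius_complex_eq_norm]

theorem specRad_list_prod_le (P : (Matrix (Fin 2) (Fin 2) ℂ)ˣ) {K : ℝ}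
    {l : List (Matrix (Fin 2) (Fin 2) ℝ)}
    (hl : ∀ X ∈ l, ‖P * X.map Complex.ofReal * P⁻¹‖ ≤ K) :
    specRad l.prod ≤ K ^ l.length := by
  have hmap : l.prod.map Complex.ofReal = (l.map (·.map Complex.ofReal)).prod :=
    map_list_prod (Complex.ofRealHom.mapMatrix (m := Fin 2)) l
  calc specRad l.prod = _ := specRad_eq_toReal_spectralRadius_conj P _
    _ ≤ ‖P * (l.map (·.map Complex.ofReal)).prod * P⁻¹‖ :=
        hmap ▸ toReal_spectralRadius_le_norm ℂ _
    _ ≤ K ^ (l.map (·.map Complex.ofReal)).length :=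
        norm_units_conj_list_prod_le P (List.forall_mem_map.2 hl)
    _ = K ^ l.length := by rw [List.length_map]

variable {𝒜 : Set (Matrix (Fin 2) (Fin 2) ℝ)}

theorem rpow_specRad_le_of_forall_exists_conj {m : ℝ} (hm : 0 ≤ m)
    (h : ∀ ε > 0, ∃ P : (Matrix (Fin 2) (Fin 2) ℂ)ˣ,
      ∀ X ∈ 𝒜, ‖P * X.map Complex.ofReal * P⁻¹‖ ≤ m + ε)
    {n : ℕ} (hn : 1 ≤ n) {M : Matrix (Fin 2) (Fin 2) ℝ} (hM : M ∈ prodsOfLen 𝒜 n) :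
    specRad M ^ ((1 : ℝ) / n) ≤ m := by
  obtain ⟨l, rfl, hl, rfl⟩ := hM
  refine le_of_forall_pos_le_add fun ε hε => ?_
  obtain ⟨P, hP⟩ := h ε hε
  have hword : specRad l.prod ≤ (m + ε) ^ l.length :=
    specRad_list_prod_le P fun X hX => hP X (hl X hX)
  calc specRad l.prod ^ ((1 : ℝ) / l.length)
      ≤ ((m + ε) ^ l.length) ^ ((1 : ℝ) / l.length) :=
        Real.rpow_le_rpow ENNReal.toReal_nonneg hword (by positivity)
    _ = m + ε := by rw [one_div, Real.pow_rpow_inv_natCast (by positivity) (by omega)]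

theorem mem_prodsOfLen_one {X : Matrix (Fin 2) (Fin 2) ℝ} (hX : X ∈ 𝒜) :
    X ∈ prodsOfLen 𝒜 1 :=
  ⟨[X], rfl, by simpa using hX, by simp⟩

theorem gsr_eq_specRad_of_forall_le {X : Matrix (Fin 2) (Fin 2) ℝ} (hX : X ∈ 𝒜)
    (h : ∀ n, 1 ≤ n → ∀ M ∈ prodsOfLen 𝒜 n, specRad M ^ ((1 : ℝ) / n) ≤ specRad X) :
    gsr 𝒜 = specRad X ∧ hasSpectralFiniteness 𝒜 := by
  have hmem : specRad X ∈ {x : ℝ | ∃ n : ℕ, 1 ≤ n ∧ ∃ M ∈ prodsOfLen 𝒜 n,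
      x = specRad M ^ ((1 : ℝ) / n)} := ⟨1, le_rfl, X, mem_prodsOfLen_one hX, by simp⟩
  have hub : ∀ x ∈ {x : ℝ | ∃ n : ℕ, 1 ≤ n ∧ ∃ M ∈ prodsOfLen 𝒜 n,
      x = specRad M ^ ((1 : ℝ) / n)}, x ≤ specRad X := by
    rintro _ ⟨n, hn, M, hM, rfl⟩
    exact h n hn M hM
  have hgsr : gsr 𝒜 = specRad X :=
    le_antisymm (csSup_le ⟨_, hmem⟩ hub) (le_csSup ⟨_, hub⟩ hmem)
  exact ⟨hgsr, 1, le_rfl, X, mem_prodsOfLen_one hX, by simp [hgsr]⟩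

end SpecRad

theorem diagScaling_conj_ofReal (u : ℂˣ) (a b c d : ℝ) :
    diagScaling u * (!![a, b; c, d]).map Complex.ofReal * (diagScaling u)⁻¹ =
      !![(a : ℂ), b * (u : ℂ)⁻¹; c * u, d] := by
  rw [← diagScaling_conj]
  congr
  ext i j; fin_cases i <;> fin_cases j <;> rfl

theorem norm_diagScaling_conj_diagonal (u : ℂˣ) (l1 l2 : ℝ) :
    ‖diagScaling u * (!![l1, 0; 0, l2]).map Complex.ofReal * (diagScaling u)⁻¹‖ =
      specRad !![l1, 0; 0, l2] := by
  refine norm_conj_eq_specRad ?_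
  rw [diagScaling_conj_ofReal]
  simpa using isSelfAdjoint_ofReal_fin_two l1 0 l2

section OffDiagonal
variable {a b c d : ℝ}

theorem exists_norm_diagScaling_conj_eq_specRad_of_mul_pos (hbc : 0 < b * c) :
    ∃ u : ℂˣ, ‖diagScaling u * (!![a, b; c, d]).map Complex.ofReal * (diagScaling u)⁻¹‖ =
      specRad !![a, b; c, d] := by
  have hc : c ≠ 0 := by rintro rfl; simp at hbc
  have hbc_div : 0 < b / c := by
    rw [show b / c = b * c / (c * c) by field_simp]
    exact div_pos hbc (mul_self_pos.2 hc)
  set u := √(b / c)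
  have hu : 0 < u := Real.sqrt_pos.2 hbc_div
  have hsymm : b * u⁻¹ = c * u := by
    field_simp
    rw [Real.sq_sqrt hbc_div.le]
    field_simp
  refine ⟨Units.mk0 (u : ℂ) (by exact_mod_cast hu.ne'), norm_conj_eq_specRad ?_⟩
  have hsymmC : (b : ℂ) * (u : ℂ)⁻¹ = (c * u : ℝ) := by exact_mod_cast hsymm
  rw [diagScaling_conj_ofReal, Units.val_mk0, hsymmC]
  simpa using isSelfAdjoint_ofReal_fin_two a (c * u) d

theorem norm_diagScaling_conj_le_of_mul_eq_zero (hbc : b * c = 0) (u : ℂˣ) :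
    ‖diagScaling u * (!![a, b; c, d]).map Complex.ofReal * (diagScaling u)⁻¹‖ ≤
      specRad !![a, b; c, d] + max (|b| * ‖(u : ℂ)‖⁻¹) (|c| * ‖(u : ℂ)‖) := by
  set Q := diagScaling u * (!![a, b; c, d]).map Complex.ofReal * (diagScaling u)⁻¹
  have hQ : Q = !![(a : ℂ), b * (u : ℂ)⁻¹; c * u, d] := diagScaling_conj_ofReal u a b c d
  have hQ01 : Q 0 1 * Q 1 0 = 0 := by simpa [hQ] using mul_eq_zero.1 hbc
  calc ‖Q‖ ≤ (spectralRadius ℂ Q).toReal + max ‖Q 0 1‖ ‖Q 1 0‖ :=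
        norm_le_toReal_spectralRadius_add_of_mul_eq_zero hQ01
    _ = _ := by
        rw [← specRad_eq_toReal_spectralRadius_conj, hQ]
        simp

theorem exists_norm_diagScaling_conj_le (hbc : 0 ≤ b * c) {ε : ℝ} (hε : 0 < ε) :
    ∃ u : ℂˣ, ‖diagScaling u * (!![a, b; c, d]).map Complex.ofReal * (diagScaling u)⁻¹‖ ≤
      specRad !![a, b; c, d] + ε := by
  rcases hbc.lt_or_eq with hpos | hzero
  · obtain ⟨u, hu⟩ := exists_norm_diagScaling_conj_eq_specRad_of_mul_pos (a := a) (d := d) hpos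
    exact ⟨u, hu.le.trans (le_add_of_nonneg_right hε.le)⟩
  have hsmall : ∀ x : ℝ, ∃ t : ℂˣ, |x| * ‖(t : ℂ)‖ ≤ ε := fun x => by
    have ht : 0 < ε / (|x| + 1) := by positivity
    refine ⟨Units.mk0 ((ε / (|x| + 1) : ℝ) : ℂ) (by exact_mod_cast ht.ne'), ?_⟩
    rw [Units.val_mk0, Complex.norm_real, Real.norm_of_nonneg ht.le, ← mul_div_assoc,
      div_le_iff₀ (by positivity)]
    nlinarith [abs_nonneg x]
  rcases mul_eq_zero.1 hzero.symm with rfl | rfl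
  · obtain ⟨t, ht⟩ := hsmall c
    refine ⟨t, (norm_diagScaling_conj_le_of_mul_eq_zero (by simp) t).trans ?_⟩
    simpa using ht
  · obtain ⟨t, ht⟩ := hsmall b
    refine ⟨t⁻¹, (norm_diagScaling_conj_le_of_mul_eq_zero (by simp) t⁻¹).trans ?_⟩
    simpa using ht

end OffDiagonal

/-- for a diagonal `A` and a matrix `B` with `b * c ≥ 0`, the
generalized spectral radius of `{A, B}` is `max {ρ(A), ρ(B)}`; in particular
`{A, B}` has the spectral finiteness property. -/
theorem gsr_diagonal_and_nonneg_offdiagonal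
    (l1 l2 a b c d : ℝ)
    (A B : Matrix (Fin 2) (Fin 2) ℝ)
    (hA : A = !![l1, 0; 0, l2]) (hB : B = !![a, b; c, d])
    (hbc : b * c ≥ 0) :
    gsr {A, B} = max (specRad A) (specRad B) ∧ hasSpectralFiniteness {A, B} := by
  have hbound : ∀ ε > 0, ∃ P : (Matrix (Fin 2) (Fin 2) ℂ)ˣ,
      ∀ X ∈ ({A, B} : Set _),
        ‖P * X.map Complex.ofReal * P⁻¹‖ ≤ max (specRad A) (specRad B) + ε := by
    intro ε hε
    obtain ⟨u, hu⟩ := exists_norm_diagScaling_conj_le (a := a) (d := d) hbc hε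
    refine ⟨diagScaling u, ?_⟩
    have hAu : ‖diagScaling u * A.map Complex.ofReal * (diagScaling u)⁻¹‖ = specRad A :=
      hA ▸ norm_diagScaling_conj_diagonal u l1 l2
    rw [← hB] at hu
    simp only [Set.forall_mem_insert, Set.mem_singleton_iff, forall_eq]
    exact ⟨hAu ▸ le_add_of_le_of_nonneg (le_max_left _ _) hε.le,
      hu.trans (add_le_add_left (le_max_right _ _) ε)⟩
  have hle : ∀ n, 1 ≤ n → ∀ M ∈ prodsOfLen {A, B} n,
      specRad M ^ ((1 : ℝ) / n) ≤ max (specRad A) (specRad B) := fun n hn M hM =>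
    rpow_specRad_le_of_forall_exists_conj (le_max_of_le_left ENNReal.toReal_nonneg) hbound hn hM
  rcases max_choice (specRad A) (specRad B) with h | h <;> rw [h] at hle ⊢ <;>
    exact gsr_eq_specRad_of_forall_le (by simp) hle
end

section
/- Let A = [[λ₁, 0], [0, λ₂]] and B = [[0, b], [c, 0]] be real 2×2 matrices with max{|λ₁|, |λ₂|} < 1 and √(|b·c|) < 1. Then for every sequence {(m_k, n_k)}_{k≥1} of pairs of positive integers, the operator norms ‖A^{m₁}·B^{n₁}·A^{m₂}·B^{n₂}⋯A^{m_k}·B^{n_k}‖₂ tend to 0 as k → +∞, where ‖·‖₂ is the matrix norm induced by the standard Euclidean norm on ℝ². -/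
open Matrix Filter

open scoped Matrix.Norms.L2Operator

/-! Conjugation by `D = diag(e, 1)` fixes `A` and turns `B` into `!![0, e * b; c / e, 0]`;
since `|b * c| < 1`, `e` can be chosen so that this matrix has norm at most `1`. In that frame
every factor `A ^ m * B ^ n` has norm at most `‖A‖ < 1`, so the products decay geometrically,
and conjugating back only costs the constant `‖D⁻¹‖ * ‖D‖`. -/

theorem SemiconjBy.list_prod_map_range {M : Type*} [Monoid M] {a : M} {f g : ℕ → M}
    (h : ∀ i, SemiconjBy a (f i) (g i)) (k : ℕ) :
    SemiconjBy a ((List.range k).map f).prod ((List.range k).map g).prod := by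
  induction k with
  | zero => exact SemiconjBy.one_right a
  | succ k ih =>
    simp only [List.range_succ, List.map_append, List.prod_append, List.map_cons, List.map_nil,
      List.prod_cons, List.prod_nil, mul_one]
    exact ih.mul_right (h k)

section NormedRing

variable {R : Type*} [NormedRing R]

theorem norm_le_of_semiconjBy {a a' x y : R} (h : SemiconjBy a x y) (ha : a' * a = 1) :
    ‖x‖ ≤ ‖a'‖ * ‖y‖ * ‖a‖ := by
  have hx : x = a' * y * a := by rw [mul_assoc, ← h.eq, ← mul_assoc, ha, one_mul]
  rw [hx]
  exact (norm_mul_le _ _).trans (mul_le_mul_of_nonneg_right (norm_mul_le _ _) (norm_nonneg _))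

variable [NormOneClass R]

theorem norm_prod_map_range_le_pow {g : ℕ → R} {q : ℝ} (hg : ∀ i, ‖g i‖ ≤ q) (k : ℕ) :
    ‖((List.range k).map g).prod‖ ≤ q ^ k := by
  have hq : 0 ≤ q := (norm_nonneg _).trans (hg 0)
  induction k with
  | zero => simp
  | succ k ih =>
    rw [List.range_succ, List.map_append, List.prod_append, pow_succ]
    simp only [List.map_cons, List.map_nil, List.prod_cons, List.prod_nil, mul_one]
    exact (norm_mul_le _ _).trans (mul_le_mul ih (hg k) (norm_nonneg _) (by positivity))

theorem norm_pow_mul_pow_le {a b : R} (ha : ‖a‖ ≤ 1) (hb : ‖b‖ ≤ 1) {m : ℕ} (hm : 1 ≤ m)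
    (n : ℕ) : ‖a ^ m * b ^ n‖ ≤ ‖a‖ :=
  calc ‖a ^ m * b ^ n‖ ≤ ‖a‖ ^ m * ‖b‖ ^ n :=
        (norm_mul_le _ _).trans (mul_le_mul (norm_pow_le a m) (norm_pow_le b n)
          (norm_nonneg _) (by positivity))
    _ ≤ ‖a‖ ^ 1 * 1 := mul_le_mul (pow_le_pow_of_le_one (norm_nonneg a) ha hm)
        (pow_le_one₀ (norm_nonneg b) hb) (by positivity) (by positivity)
    _ = ‖a‖ := by ring

theorem tendsto_norm_prod_map_range_of_semiconjBy {a a' : R} (ha : a' * a = 1) {f g : ℕ → R}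
    (hfg : ∀ i, SemiconjBy a (f i) (g i)) {q : ℝ} (hg : ∀ i, ‖g i‖ ≤ q) (hq : q < 1) :
    Tendsto (fun k => ‖((List.range k).map f).prod‖) atTop (nhds 0) := by
  have hq0 : 0 ≤ q := (norm_nonneg _).trans (hg 0)
  have hbound (k : ℕ) : ‖((List.range k).map f).prod‖ ≤ ‖a'‖ * q ^ k * ‖a‖ :=
    (norm_le_of_semiconjBy (SemiconjBy.list_prod_map_range hfg k) ha).trans <| by
      gcongr; exact norm_prod_map_range_le_pow hg k
  have hlim : Tendsto (fun k : ℕ => ‖a'‖ * q ^ k * ‖a‖) atTop (nhds 0) := by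
    simpa using ((tendsto_pow_atTop_nhds_zero_of_lt_one hq0 hq).const_mul ‖a'‖).mul_const ‖a‖
  exact squeeze_zero (fun _ => norm_nonneg _) hbound hlim

end NormedRing

namespace Matrix

theorem commute_diag_fin_two {α : Type*} [CommSemiring α] (a d a' d' : α) :
    Commute !![a, 0; 0, d] !![a', 0; 0, d'] := by
  simp [Commute, SemiconjBy, mul_comm]

theorem semiconjBy_diag_antidiag_fin_two {K : Type*} [Field K] {e : K} (he : e ≠ 0) (b c : K) :
    SemiconjBy !![e, 0; 0, 1] !![0, b; c, 0] !![0, e * b; c / e, 0] := by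
  simp [SemiconjBy, he]

variable {𝕜 : Type*} [RCLike 𝕜]

theorem l2_opNorm_diag_fin_two (a d : 𝕜) : ‖!![a, 0; 0, d]‖ = max ‖a‖ ‖d‖ := by
  have h : !![a, 0; 0, d] = diagonal ![a, d] := by rw [diagonal_fin_two]; rfl
  rw [h, l2_opNorm_diagonal]
  simp [Pi.norm_def, Fin.univ_succ]

theorem l2_opNorm_antidiag_fin_two (u v : 𝕜) : ‖!![0, u; v, 0]‖ = max ‖u‖ ‖v‖ := by
  have hsq : (!![0, u; v, 0])ᴴ * !![0, u; v, 0] = !![star v * v, 0; 0, star u * u] := by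
    ext i j; fin_cases i <;> fin_cases j <;> simp [mul_apply, Fin.sum_univ_two]
  refine (mul_self_inj (norm_nonneg _) (le_max_of_le_left (norm_nonneg u))).mp ?_
  rw [← l2_opNorm_conjTranspose_mul_self, hsq, l2_opNorm_diag_fin_two, norm_mul, norm_mul,
    norm_star, norm_star]
  rcases le_total ‖u‖ ‖v‖ with h | h
  · rw [max_eq_right h, max_eq_left (mul_self_le_mul_self (norm_nonneg u) h)]
  · rw [max_eq_left h, max_eq_right (mul_self_le_mul_self (norm_nonneg v) h)]

theorem exists_ne_zero_l2_opNorm_antidiag_mul_div_le_one {b c : ℝ} (hbc : |b * c| ≤ 1) :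
    ∃ e : ℝ, e ≠ 0 ∧ ‖!![0, e * b; c / e, 0]‖ ≤ 1 := by
  -- `e` lies between `|c|` and `1 / |b|`, which is possible because `|b| * |c| ≤ 1`
  have hb : 0 < 1 + |b| := by positivity
  have hc : 0 < 1 + |c| := by positivity
  rw [abs_mul] at hbc
  refine ⟨(1 + |c|) / (1 + |b|), by positivity, ?_⟩
  rw [l2_opNorm_antidiag_fin_two, Real.norm_eq_abs, Real.norm_eq_abs, abs_mul, abs_div, abs_div,
    abs_div, abs_of_pos hb, abs_of_pos hc]
  refine max_le ?_ ?_
  · rw [div_mul_eq_mul_div, div_le_one hb]; nlinarith [abs_nonneg b]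
  · rw [div_div_eq_mul_div, div_le_one hc]; nlinarith [abs_nonneg c]

end Matrix

theorem prod_tendsto_zero_of_spectral_radii_lt_one_general
    (l1 l2 b c : ℝ)
    (A B : Matrix (Fin 2) (Fin 2) ℝ)
    (hA : A = !![l1, 0; 0, l2]) (hB : B = !![0, b; c, 0])
    (hAlt : max |l1| |l2| < 1) (hBlt : Real.sqrt |b * c| < 1)
    (m n : ℕ → ℕ) (hm : ∀ k, 1 ≤ m k) :
    Tendsto
      (fun k : ℕ => ‖((List.range k).map (fun i => A ^ m i * B ^ n i)).prod‖)
      atTop (nhds 0) := by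
  subst hA hB
  have hbc : |b * c| ≤ 1 := by simpa using ((Real.sqrt_lt' one_pos).mp hBlt).le
  obtain ⟨e, he, hB'⟩ := exists_ne_zero_l2_opNorm_antidiag_mul_div_le_one hbc
  have hA' : ‖!![l1, 0; 0, l2]‖ < 1 := by
    rwa [l2_opNorm_diag_fin_two, Real.norm_eq_abs, Real.norm_eq_abs]
  refine tendsto_norm_prod_map_range_of_semiconjBy (a := !![e, 0; 0, 1])
    (a' := !![e⁻¹, 0; 0, 1]) (by simp [he, one_fin_two])
    (fun i => SemiconjBy.mul_right ((commute_diag_fin_two _ _ _ _).pow_right _)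
      ((semiconjBy_diag_antidiag_fin_two he b c).pow_right _))
    (fun i => norm_pow_mul_pow_le hA'.le hB' (hm i) _) hA'

/-- if `A = diag(λ₁, λ₂)` with `max {|λ₁|, |λ₂|} < 1` and
`B = !![0, b; c, 0]` with `√|b*c| < 1`, then for every sequence `(m k, n k)`
of pairs of positive integers the products
`A^(m 0) * B^(n 0) * ⋯ * A^(m (k-1)) * B^(n (k-1))` tend to `0` in the
operator norm induced by the Euclidean norm on `ℝ²` as `k → ∞`. -/
theorem prod_tendsto_zero_of_spectral_radii_lt_one
    (l1 l2 b c : ℝ)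
    (A B : Matrix (Fin 2) (Fin 2) ℝ)
    (hA : A = !![l1, 0; 0, l2]) (hB : B = !![0, b; c, 0])
    (hAlt : max |l1| |l2| < 1) (hBlt : Real.sqrt |b * c| < 1)
    (m n : ℕ → ℕ) (hm : ∀ k, 1 ≤ m k) (hn : ∀ k, 1 ≤ n k) :
    Tendsto
      (fun k : ℕ => ‖((List.range k).map (fun i => A ^ m i * B ^ n i)).prod‖)
      atTop (nhds 0) :=
  prod_tendsto_zero_of_spectral_radii_lt_one_general l1 l2 b c A B hA hB hAlt hBlt m n hm
end

section
/- Let K ≥ 1 and let 𝒜 = {A₀, …, A_K} ⊂ ℝ^{2×2} where A₀ = [[a, b], [c, d]] and A_k = [[a_k, r_k·b], [r_k·c, d_k]] for 1 ≤ k ≤ K, with b·c ≥ 0. Then 𝒜 is absolutely stable (i.e. max_{M ∈ 𝒜ⁿ} ‖M‖ → 0 as n → +∞) if and only if ρ(A_k) < 1 for all 0 ≤ k ≤ K. -/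
/-!
Since `(r k * b) * (r k * c) = r k ^ 2 * (b * c) ≥ 0`, every `A k` has real eigenvalues, and
its spectral radius is the modulus of one of them, `μ`. As `|μ| ^ n ≤ ‖A k ^ n‖` and `A k ^ n ∈ 𝒜ⁿ`,
absolute stability forces `ρ(A k) < 1`.

Conversely, conjugating by `diag(t, 1)` multiplies every upper-right entry by `t` and divides every
lower-left entry by `t`, simultaneously for all `k`. If `b * c > 0`, then `t = √(c / b)` makes all
conjugates symmetric, and the norm of a symmetric `2 × 2` matrix is at most its spectral radius.
If `b * c = 0`, every `A k` is triangular with `ρ(A k) = max |aa k| |dd k|`, and a small or large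
`t` makes all off-diagonal entries as small as needed. In both cases a single conjugation brings
every `A k` to norm at most some `Q < 1`, so products of length `n` have norm `O(Qⁿ)`.
-/

open Matrix Filter

open scoped Matrix.Norms.L2Operator

/-- `𝒜` is absolutely stable if `max_{M ∈ 𝒜ⁿ} ‖M‖ → 0` as `n → ∞`, where the
norm is the operator norm induced by the Euclidean vector norm. -/
def AbsolutelyStable (𝒜 : Set (Matrix (Fin 2) (Fin 2) ℝ)) : Prop :=
  Tendsto (fun N : ℕ => sSup ((fun M => ‖M‖) '' prodsOfLen 𝒜 (N + 1)))
    atTop (nhds 0)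

lemma mem_spectrum_fin_two_iff_s6 {𝕜 : Type*} [Field 𝕜] {a p q d z : 𝕜} :
    z ∈ spectrum 𝕜 !![a, p; q, d] ↔ (z - a) * (z - d) = p * q := by
  have hsub : algebraMap 𝕜 (Matrix (Fin 2) (Fin 2) 𝕜) z - !![a, p; q, d]
      = !![z - a, -p; -q, z - d] := by
    ext i j
    fin_cases i <;> fin_cases j <;> simp [algebraMap_matrix_apply]
  rw [spectrum.mem_iff, hsub, isUnit_iff_isUnit_det, isUnit_iff_ne_zero, not_not,
    det_fin_two_of]
  constructor <;> intro h <;> linear_combination h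

lemma specRad_fin_two {a p q d w : ℝ} (hw : w ^ 2 = ((a - d) / 2) ^ 2 + p * q) :
    specRad !![a, p; q, d] = max |(a + d) / 2 - w| |(a + d) / 2 + w| := by
  have hspec : spectrum ℂ ((!![a, p; q, d]).map Complex.ofReal)
      = {(((a + d) / 2 - w : ℝ) : ℂ), (((a + d) / 2 + w : ℝ) : ℂ)} := by
    have hwC : (w : ℂ) ^ 2 = ((a - d) / 2) ^ 2 + p * q := by exact_mod_cast hw
    have hmap : (!![a, p; q, d]).map Complex.ofReal = !![(a : ℂ), p; q, d] := by
      ext i j; fin_cases i <;> fin_cases j <;> rfl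
    ext z
    rw [hmap, mem_spectrum_fin_two_iff_s6]
    have hfactor : (z - a) * (z - d) - p * q
        = (z - (((a + d) / 2 - w : ℝ) : ℂ)) * (z - (((a + d) / 2 + w : ℝ) : ℂ)) := by
      push_cast
      linear_combination hwC
    simp only [← sub_eq_zero (a := (z - a) * (z - d)), hfactor,
      mul_eq_zero, sub_eq_zero, Set.mem_insert_iff, Set.mem_singleton_iff]
  rw [specRad, spectralRadius, hspec, iSup_insert, iSup_singleton,
    ENNReal.toReal_sup ENNReal.coe_ne_top ENNReal.coe_ne_top, ENNReal.coe_toReal,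
    ENNReal.coe_toReal, coe_nnnorm, coe_nnnorm, Complex.norm_real, Complex.norm_real,
    Real.norm_eq_abs, Real.norm_eq_abs]

lemma exists_mem_spectrum_abs_eq_specRad {a p q d : ℝ} (h : 0 ≤ ((a - d) / 2) ^ 2 + p * q) :
    ∃ μ ∈ spectrum ℝ !![a, p; q, d], |μ| = specRad !![a, p; q, d] := by
  set w := √(((a - d) / 2) ^ 2 + p * q)
  have hw : w ^ 2 = ((a - d) / 2) ^ 2 + p * q := Real.sq_sqrt h
  rw [specRad_fin_two hw]
  rcases max_choice |(a + d) / 2 - w| |(a + d) / 2 + w| with hmax | hmax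
  · exact ⟨(a + d) / 2 - w, mem_spectrum_fin_two_iff_s6.2 (by linear_combination hw), hmax.symm⟩
  · exact ⟨(a + d) / 2 + w, mem_spectrum_fin_two_iff_s6.2 (by linear_combination hw), hmax.symm⟩

lemma norm_symm_fin_two_le (a s d : ℝ) :
    ‖!![a, s; s, d]‖ ≤ |(a + d) / 2| + √(((a - d) / 2) ^ 2 + s ^ 2) := by
  set S : Matrix (Fin 2) (Fin 2) ℝ := !![(a - d) / 2, s; s, -((a - d) / 2)]
  -- `S` has a scalar square, so the C*-identity `‖Sᴴ * S‖ = ‖S‖ ^ 2` gives its norm.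
  have hSS : Sᴴ * S = (((a - d) / 2) ^ 2 + s ^ 2) • 1 := by
    ext i j
    fin_cases i <;> fin_cases j <;> simp [S, mul_apply, Fin.sum_univ_two] <;> ring
  have hS : ‖S‖ = √(((a - d) / 2) ^ 2 + s ^ 2) := by
    rw [← Real.sqrt_mul_self (norm_nonneg S), ← l2_opNorm_conjTranspose_mul_self, hSS,
      norm_smul, norm_one, mul_one, Real.norm_of_nonneg (by positivity)]
  have hsplit : !![a, s; s, d] = ((a + d) / 2) • (1 : Matrix (Fin 2) (Fin 2) ℝ) + S := by
    ext i j
    fin_cases i <;> fin_cases j <;> simp [S] <;> ring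
  calc ‖!![a, s; s, d]‖ ≤ ‖((a + d) / 2) • (1 : Matrix (Fin 2) (Fin 2) ℝ)‖ + ‖S‖ := by
        rw [hsplit]; exact norm_add_le _ _
    _ = _ := by rw [norm_smul, norm_one, mul_one, Real.norm_eq_abs, hS]

lemma norm_antidiag_fin_two (p q : ℝ) : ‖!![0, p; q, 0]‖ = max |p| |q| := by
  set X : Matrix (Fin 2) (Fin 2) ℝ := !![0, p; q, 0]
  have hXX : Xᴴ * X = diagonal ![q ^ 2, p ^ 2] := by
    ext i j
    fin_cases i <;> fin_cases j <;> simp [X, mul_apply, Fin.sum_univ_two] <;> ring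
  have h := l2_opNorm_conjTranspose_mul_self X
  rw [hXX, l2_opNorm_diagonal] at h
  have hdiag : ‖(![q ^ 2, p ^ 2] : Fin 2 → ℝ)‖ = max |p| |q| ^ 2 := by
    rcases le_total |p| |q| with hpq | hpq
    · simp [Pi.norm_def, Fin.univ_succ, max_eq_right hpq, sq_le_sq.2 hpq]
    · simp [Pi.norm_def, Fin.univ_succ, max_eq_left hpq, sq_le_sq.2 hpq]
  rw [← Real.sqrt_mul_self (norm_nonneg X), ← h, hdiag, Real.sqrt_sq (by positivity)]

lemma norm_symm_le_specRad {a p q d s : ℝ} (hs : s ^ 2 = p * q) :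
    ‖!![a, s; s, d]‖ ≤ specRad !![a, p; q, d] := by
  set m := (a + d) / 2
  set w := √(((a - d) / 2) ^ 2 + s ^ 2)
  rw [specRad_fin_two (w := w) (by rw [Real.sq_sqrt (by positivity), hs])]
  refine (norm_symm_fin_two_le a s d).trans ?_
  rcases le_total 0 m with hm | hm
  · exact le_max_of_le_right (by rw [abs_of_nonneg hm]; exact le_abs_self _)
  · exact le_max_of_le_left (by rw [abs_of_nonpos hm]; linarith [neg_le_abs (m - w)])

lemma norm_le_specRad_add_of_mul_eq_zero {a p q d : ℝ} (hpq : p * q = 0) (p' q' : ℝ) :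
    ‖!![a, p'; q', d]‖ ≤ specRad !![a, p; q, d] + max |p'| |q'| := by
  have hρ : specRad !![a, p; q, d] = max |a| |d| := by
    rw [specRad_fin_two (w := (a - d) / 2) (by rw [hpq, add_zero]), max_comm]
    ring_nf
  have hsplit : !![a, p'; q', d] = diagonal ![a, d] + !![0, p'; q', 0] := by
    ext i j
    fin_cases i <;> fin_cases j <;> simp
  rw [hρ, hsplit, ← norm_antidiag_fin_two p' q']
  refine (norm_add_le _ _).trans_eq ?_
  simp [Pi.norm_def, Fin.univ_succ]

lemma prodsOfLen_zero (𝒜 : Set (Matrix (Fin 2) (Fin 2) ℝ)) : prodsOfLen 𝒜 0 = {1} := by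
  ext M
  constructor
  · rintro ⟨l, hl, -, rfl⟩
    simp [List.length_eq_zero_iff.mp hl]
  · rintro rfl
    exact ⟨[], rfl, by simp, by simp⟩

lemma prodsOfLen_succ (𝒜 : Set (Matrix (Fin 2) (Fin 2) ℝ)) (n : ℕ) :
    prodsOfLen 𝒜 (n + 1) = Set.image2 (· * ·) 𝒜 (prodsOfLen 𝒜 n) := by
  ext M
  constructor
  · rintro ⟨_ | ⟨X, l⟩, hl, hmem, rfl⟩
    · simp at hl
    · exact ⟨X, hmem X List.mem_cons_self, l.prod,
        ⟨l, by simpa using hl, fun Y hY => hmem Y (List.mem_cons_of_mem _ hY), rfl⟩,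
        List.prod_cons.symm⟩
  · rintro ⟨X, hX, _, ⟨l, rfl, hmem, rfl⟩, rfl⟩
    refine ⟨X :: l, rfl, ?_, List.prod_cons.symm⟩
    simpa [List.mem_cons, forall_eq_or_imp] using ⟨hX, hmem⟩

lemma prodsOfLen_finite {𝒜 : Set (Matrix (Fin 2) (Fin 2) ℝ)} (h𝒜 : 𝒜.Finite) (n : ℕ) :
    (prodsOfLen 𝒜 n).Finite := by
  induction n with
  | zero => simp [prodsOfLen_zero]
  | succ n ih => rw [prodsOfLen_succ]; exact h𝒜.image2 _ ih

lemma pow_mem_prodsOfLen {𝒜 : Set (Matrix (Fin 2) (Fin 2) ℝ)}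
    {X : Matrix (Fin 2) (Fin 2) ℝ} (hX : X ∈ 𝒜) (n : ℕ) : X ^ n ∈ prodsOfLen 𝒜 n :=
  ⟨List.replicate n X, List.length_replicate,
    fun _ hY => List.eq_of_mem_replicate hY ▸ hX, (List.prod_replicate n X).symm⟩

lemma norm_le_pow_of_mem_prodsOfLen {𝒜 : Set (Matrix (Fin 2) (Fin 2) ℝ)} {Q : ℝ}
    (hQ0 : 0 ≤ Q) (hQ : ∀ X ∈ 𝒜, ‖X‖ ≤ Q) {n : ℕ} {M : Matrix (Fin 2) (Fin 2) ℝ}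
    (hM : M ∈ prodsOfLen 𝒜 n) : ‖M‖ ≤ Q ^ n := by
  induction n generalizing M with
  | zero => simp_all [prodsOfLen_zero]
  | succ n ih =>
    rw [prodsOfLen_succ] at hM
    obtain ⟨X, hX, N, hN, rfl⟩ := hM
    calc ‖X * N‖ ≤ ‖X‖ * ‖N‖ := norm_mul_le _ _
      _ ≤ Q * Q ^ n := mul_le_mul (hQ X hX) (ih hN) (norm_nonneg _) hQ0
      _ = Q ^ (n + 1) := (pow_succ' Q n).symm

lemma conj_mem_prodsOfLen {𝒜 : Set (Matrix (Fin 2) (Fin 2) ℝ)}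
    {P P' : Matrix (Fin 2) (Fin 2) ℝ} (hP : P' * P = 1) {n : ℕ} {M : Matrix (Fin 2) (Fin 2) ℝ}
    (hM : M ∈ prodsOfLen 𝒜 n) : P * M * P' ∈ prodsOfLen ((fun X => P * X * P') '' 𝒜) n := by
  induction n generalizing M with
  | zero => simp_all [prodsOfLen_zero, mul_eq_one_comm.1 hP]
  | succ n ih =>
    rw [prodsOfLen_succ] at hM ⊢
    obtain ⟨X, hX, N, hN, rfl⟩ := hM
    refine ⟨_, ⟨X, hX, rfl⟩, _, ih hN, ?_⟩
    simp only [mul_assoc, ← mul_assoc P' P, hP, one_mul]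

lemma absolutelyStable_of_norm_le_mul_pow {𝒜 : Set (Matrix (Fin 2) (Fin 2) ℝ)} {C Q : ℝ}
    (hC : 0 ≤ C) (hQ0 : 0 ≤ Q) (hQ1 : Q < 1)
    (h : ∀ n, ∀ M ∈ prodsOfLen 𝒜 n, ‖M‖ ≤ C * Q ^ n) : AbsolutelyStable 𝒜 := by
  have hlim : Tendsto (fun N : ℕ => C * Q ^ (N + 1)) atTop (nhds 0) := by
    simpa using ((tendsto_pow_atTop_nhds_zero_of_lt_one hQ0 hQ1).comp
      (tendsto_add_atTop_nat 1)).const_mul C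
  refine squeeze_zero (fun N => Real.sSup_nonneg ?_)
    (fun N => Real.sSup_le ?_ (by positivity)) hlim
  · rintro _ ⟨M, -, rfl⟩
    exact norm_nonneg M
  · rintro _ ⟨M, hM, rfl⟩
    exact h _ M hM

lemma absolutelyStable_of_norm_conj_lt_one {𝒜 : Set (Matrix (Fin 2) (Fin 2) ℝ)}
    {P P' : Matrix (Fin 2) (Fin 2) ℝ} (hP : P' * P = 1) (h𝒜 : 𝒜.Finite)
    (h : ∀ X ∈ 𝒜, ‖P * X * P'‖ < 1) : AbsolutelyStable 𝒜 := by
  set Q := sSup (insert 0 ((fun X => ‖P * X * P'‖) '' 𝒜))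
  have hfin : (insert 0 ((fun X => ‖P * X * P'‖) '' 𝒜)).Finite := (h𝒜.image _).insert 0
  have hQ1 : Q < 1 := (hfin.csSup_lt_iff (Set.insert_nonempty _ _)).2 (by simpa using h)
  have hQ0 : 0 ≤ Q := le_csSup hfin.bddAbove (Set.mem_insert _ _)
  have hQ : ∀ X ∈ 𝒜, ‖P * X * P'‖ ≤ Q := fun X hX =>
    le_csSup hfin.bddAbove (Set.mem_insert_of_mem _ ⟨X, hX, rfl⟩)
  refine absolutelyStable_of_norm_le_mul_pow (C := ‖P'‖ * ‖P‖) (by positivity) hQ0 hQ1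
    fun n M hM => ?_
  have hconj :=
    norm_le_pow_of_mem_prodsOfLen hQ0 (by simpa using hQ) (conj_mem_prodsOfLen hP hM)
  calc ‖M‖ = ‖P' * (P * M * P') * P‖ := by
        simp only [mul_assoc, hP, mul_one, ← mul_assoc P' P, one_mul]
    _ ≤ ‖P'‖ * ‖P * M * P'‖ * ‖P‖ := norm_mul₃_le
    _ ≤ ‖P'‖ * ‖P‖ * Q ^ n := by rw [mul_right_comm]; gcongr

lemma AbsolutelyStable.abs_lt_one_of_mem_spectrum {𝒜 : Set (Matrix (Fin 2) (Fin 2) ℝ)}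
    (hstab : AbsolutelyStable 𝒜) (h𝒜 : 𝒜.Finite) {X : Matrix (Fin 2) (Fin 2) ℝ} (hX : X ∈ 𝒜)
    {μ : ℝ} (hμ : μ ∈ spectrum ℝ X) : |μ| < 1 := by
  by_contra! hμ1
  obtain ⟨N, hN⟩ := (hstab.eventually (gt_mem_nhds one_pos)).exists
  have hpow : |μ| ^ (N + 1) ≤ ‖X ^ (N + 1)‖ := by
    simpa [abs_pow] using
      spectrum.norm_le_norm_of_mem (spectrum.pow_image_subset X (N + 1) ⟨μ, hμ, rfl⟩)
  have hsup : ‖X ^ (N + 1)‖ ≤ sSup ((fun M => ‖M‖) '' prodsOfLen 𝒜 (N + 1)) :=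
    le_csSup ((prodsOfLen_finite h𝒜 _).image _).bddAbove ⟨_, pow_mem_prodsOfLen hX _, rfl⟩
  linarith [one_le_pow₀ (n := N + 1) hμ1]

lemma exists_pos_abs_mul_le_and_abs_div_le {b c η : ℝ} (hbc : b * c = 0) (hη : 0 < η) :
    ∃ t > 0, |b| * t ≤ η ∧ |c| / t ≤ η := by
  rcases mul_eq_zero.1 hbc with rfl | rfl
  · refine ⟨(|c| + 1) / η, by positivity, by simpa using hη.le, ?_⟩
    rw [div_div_eq_mul_div, div_le_iff₀ (by positivity)]
    nlinarith [abs_nonneg c]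
  · refine ⟨η / (|b| + 1), by positivity, ?_, by simpa using hη.le⟩
    rw [mul_div_assoc', div_le_iff₀ (by positivity)]
    nlinarith [abs_nonneg b]

section Family

variable {ι : Type*} {b c : ℝ} {a d r : ι → ℝ}

lemma exists_pos_forall_norm_lt_one_of_mul_pos (hbc : 0 < b * c)
    (h : ∀ k, specRad !![a k, r k * b; r k * c, d k] < 1) :
    ∃ t > 0, ∀ k, ‖!![a k, r k * b * t; r k * c / t, d k]‖ < 1 := by
  have hb : b ≠ 0 := left_ne_zero_of_mul hbc.ne'
  have hcb : 0 < c / b := by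
    rw [show c / b = b * c / b ^ 2 by field_simp]
    exact div_pos hbc (by positivity)
  set t := √(c / b)
  have ht : 0 < t := Real.sqrt_pos.2 hcb
  have hbt : b * t ^ 2 = c := by
    rw [Real.sq_sqrt hcb.le]
    field_simp
  refine ⟨t, ht, fun k => ?_⟩
  rw [show r k * c / t = r k * b * t by rw [div_eq_iff ht.ne', ← hbt]; ring]
  exact (norm_symm_le_specRad (by rw [← hbt]; ring)).trans_lt (h k)

lemma exists_pos_forall_norm_lt_one_of_mul_eq_zero [Finite ι] (hbc : b * c = 0)
    (h : ∀ k, specRad !![a k, r k * b; r k * c, d k] < 1) :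
    ∃ t > 0, ∀ k, ‖!![a k, r k * b * t; r k * c / t, d k]‖ < 1 := by
  have hev : ∀ k, ∀ᶠ η in nhdsWithin 0 (Set.Ioi 0),
      specRad !![a k, r k * b; r k * c, d k] + |r k| * η < 1 := fun k =>
    mem_nhdsWithin_of_mem_nhds <| (Continuous.tendsto' (by fun_prop) 0 _ (by simp)).eventually
      (gt_mem_nhds (h k))
  obtain ⟨η, hη, hlt⟩ := (eventually_mem_nhdsWithin.and (eventually_all.2 hev)).exists
  obtain ⟨t, ht, hbt, hct⟩ := exists_pos_abs_mul_le_and_abs_div_le hbc hη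
  refine ⟨t, ht, fun k => ?_⟩
  have hoff : max |r k * b * t| |r k * c / t| ≤ |r k| * η := by
    simp only [abs_div, abs_mul, abs_of_pos ht, mul_assoc, mul_div_assoc]
    exact max_le (by gcongr) (by gcongr)
  calc ‖!![a k, r k * b * t; r k * c / t, d k]‖
      ≤ specRad !![a k, r k * b; r k * c, d k] + max |r k * b * t| |r k * c / t| :=
        norm_le_specRad_add_of_mul_eq_zero (by rw [mul_mul_mul_comm, hbc, mul_zero]) _ _
    _ ≤ specRad !![a k, r k * b; r k * c, d k] + |r k| * η := by gcongr
    _ < 1 := hlt k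

lemma exists_pos_forall_norm_lt_one [Finite ι] (hbc : 0 ≤ b * c)
    (h : ∀ k, specRad !![a k, r k * b; r k * c, d k] < 1) :
    ∃ t > 0, ∀ k, ‖!![a k, r k * b * t; r k * c / t, d k]‖ < 1 :=
  hbc.lt_or_eq.elim (exists_pos_forall_norm_lt_one_of_mul_pos · h)
    (exists_pos_forall_norm_lt_one_of_mul_eq_zero ·.symm h)

end Family

lemma diag_mul_mul_diag_inv {t : ℝ} (ht : t ≠ 0) (a p q d : ℝ) :
    !![t, 0; 0, 1] * !![a, p; q, d] * !![t⁻¹, 0; 0, 1] = !![a, p * t; q / t, d] := by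
  ext i j
  fin_cases i <;> fin_cases j <;> simp [mul_apply, Fin.sum_univ_two] <;> field_simp

theorem absolutelyStable_iff_specRad_lt_one_general
    (K : ℕ) (b c : ℝ)
    (aa dd r : Fin (K + 1) → ℝ)
    (A : Fin (K + 1) → Matrix (Fin 2) (Fin 2) ℝ)
    (hA : ∀ k, A k = !![aa k, r k * b; r k * c, dd k])
    (hbc : b * c ≥ 0) :
    AbsolutelyStable (Set.range A) ↔ ∀ k, specRad (A k) < 1 := by
  constructor
  · intro hstab k
    have hdisc : 0 ≤ ((aa k - dd k) / 2) ^ 2 + r k * b * (r k * c) := by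
      rw [mul_mul_mul_comm]
      exact add_nonneg (sq_nonneg _) (mul_nonneg (mul_self_nonneg _) hbc)
    obtain ⟨μ, hμ, hμρ⟩ := exists_mem_spectrum_abs_eq_specRad hdisc
    rw [hA k, ← hμρ]
    exact hstab.abs_lt_one_of_mem_spectrum (Set.finite_range A) ⟨k, hA k⟩ hμ
  · intro hρ
    obtain ⟨t, ht, hlt⟩ := exists_pos_forall_norm_lt_one hbc fun k => hA k ▸ hρ k
    refine absolutelyStable_of_norm_conj_lt_one (P := !![t, 0; 0, 1]) (P' := !![t⁻¹, 0; 0, 1])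
      (by simp [ht.ne', one_fin_two]) (Set.finite_range A) ?_
    rintro _ ⟨k, rfl⟩
    rw [hA k, diag_mul_mul_diag_inv ht.ne']
    exact hlt k

/-- for a family of real 2×2 matrices sharing the off-diagonal
pair `(b, c)` up to scalar factors `r k` (with `r 0 = 1`) and with `b * c ≥ 0`,
absolute stability holds if and only if every member has spectral radius
less than one. -/
theorem absolutelyStable_iff_specRad_lt_one
    (K : ℕ) (hK : 1 ≤ K) (b c : ℝ)
    (aa dd r : Fin (K + 1) → ℝ) (hr0 : r 0 = 1)
    (A : Fin (K + 1) → Matrix (Fin 2) (Fin 2) ℝ)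
    (hA : ∀ k, A k = !![aa k, r k * b; r k * c, dd k])
    (hbc : b * c ≥ 0) :
    AbsolutelyStable (Set.range A) ↔ ∀ k, specRad (A k) < 1 :=
  absolutelyStable_iff_specRad_lt_one_general K b c aa dd r A hA hbc
end

section
/- Let A₀ = [[-3, 3.5], [-4, 4.5]] and A₁ = [[0.5, 0], [0, 1]] be real 2×2 matrices. Then {A₀, A₁} cannot be simultaneously symmetrized: there is no invertible real 2×2 matrix Q such that both Q·A₀·Q⁻¹ and Q·A₁·Q⁻¹ are symmetric. -/
/-! Conjugating by `Q` makes `A` symmetric exactly when `P * A` is symmetric for the positive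
definite `P = Qᵀ * Q`. As `A₁` is diagonal with distinct entries, `P * A₁` symmetric forces `P`
to be diagonal, and then `P * A₀` symmetric reads `3.5 * P₀₀ = -4 * P₁₁` with `P₀₀, P₁₁ > 0`:
the off-diagonal entries of `A₀` have opposite signs. -/

open Matrix

namespace Matrix

variable {n R : Type*} [Fintype n] [DecidableEq n]

theorem isSymm_transpose_mul_self_mul_of_isSymm_conj [CommRing R] {Q A : Matrix n n R}
    (hQ : IsUnit Q) (h : (Q * A * Q⁻¹).IsSymm) : (Qᵀ * Q * A).IsSymm := by
  have hconj : Qᵀ * Q * A = Qᵀ * (Q * A * Q⁻¹) * Q := by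
    rw [Matrix.mul_assoc Qᵀ _ Q,
      nonsing_inv_mul_cancel_right _ _ ((isUnit_iff_isUnit_det Q).mp hQ), Matrix.mul_assoc]
  rw [hconj, IsSymm, transpose_mul, transpose_mul, transpose_transpose, h.eq, ← Matrix.mul_assoc]

theorem IsSymm.apply_eq_zero_of_mul_diagonal [CommRing R] [NoZeroDivisors R] {P : Matrix n n R}
    {d : n → R} (hP : P.IsSymm) (hPd : (P * diagonal d).IsSymm) {i j : n} (hij : d i ≠ d j) :
    P i j = 0 := by
  have h := hPd.apply j i
  rw [mul_diagonal, mul_diagonal, hP.apply i j] at h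
  exact (mul_eq_zero.mp (by linear_combination h : P i j * (d j - d i) = 0)).resolve_right
    (sub_ne_zero.mpr hij.symm)

theorem IsSymm.eq_diagonal_of_mul_diagonal [CommRing R] [NoZeroDivisors R] {P : Matrix n n R}
    {d : n → R} (hP : P.IsSymm) (hPd : (P * diagonal d).IsSymm) (hd : Function.Injective d) :
    P = diagonal P.diag := by
  ext i j
  by_cases hij : i = j
  · simp [hij]
  · rw [diagonal_apply_ne _ hij, hP.apply_eq_zero_of_mul_diagonal hPd (hd.ne hij)]

theorem mul_nonneg_of_isSymm_diagonal_mul [CommRing R] [LinearOrder R] [IsStrictOrderedRing R]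
    {p : n → R} {A : Matrix n n R} (h : (diagonal p * A).IsSymm) {i j : n} (hi : 0 < p i)
    (hj : 0 < p j) : 0 ≤ A i j * A j i := by
  have h := h.apply i j
  rw [diagonal_mul, diagonal_mul] at h
  have hsq : p i * p j * (A i j * A j i) = (p j * A j i) ^ 2 := by
    linear_combination (-(p j * A j i)) * h
  exact nonneg_of_mul_nonneg_right (hsq ▸ sq_nonneg _) (mul_pos hi hj)

end Matrix

/-- the pair `A₀ = !![-3, 3.5; -4, 4.5]`, `A₁ = !![0.5, 0; 0, 1]`
cannot be simultaneously symmetrized: no invertible real 2×2 matrix `Q` makes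
both `Q * A₀ * Q⁻¹` and `Q * A₁ * Q⁻¹` symmetric. -/
theorem not_simultaneously_symmetrizable
    (A0 A1 : Matrix (Fin 2) (Fin 2) ℝ)
    (hA0 : A0 = !![-3, 3.5; -4, 4.5]) (hA1 : A1 = !![0.5, 0; 0, 1]) :
    ¬ ∃ Q : Matrix (Fin 2) (Fin 2) ℝ,
        IsUnit Q ∧ (Q * A0 * Q⁻¹).IsSymm ∧ (Q * A1 * Q⁻¹).IsSymm := by
  rintro ⟨Q, hQ, hQ0, hQ1⟩
  have hP : (Qᵀ * Q).PosDef :=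
    PosDef.conjTranspose_mul_self Q (mulVec_injective_iff_isUnit.mpr hQ)
  have hA1_diagonal : A1 = diagonal ![0.5, 1] := by
    rw [hA1]; ext i j; fin_cases i <;> fin_cases j <;> rfl
  have hdiag : Qᵀ * Q = diagonal (Qᵀ * Q).diag := by
    refine (isSymm_transpose_mul_self Q).eq_diagonal_of_mul_diagonal (d := ![0.5, 1]) ?_ ?_
    · rw [← hA1_diagonal]; exact isSymm_transpose_mul_self_mul_of_isSymm_conj hQ hQ1
    · intro i j; fin_cases i <;> fin_cases j <;> norm_num
  have hP0 := isSymm_transpose_mul_self_mul_of_isSymm_conj hQ hQ0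
  rw [hdiag] at hP0
  have hsign := mul_nonneg_of_isSymm_diagonal_mul hP0 (i := 0) (j := 1) hP.diag_pos hP.diag_pos
  rw [hA0] at hsign
  norm_num at hsign
end
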